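/- Consider the closed-loop system X(t+1) = A X(t) Ā + B(Φ(X(t)) + E(t))B̄, where Φ satisfies ‖Φ(Z)‖ ≤ C_Φ‖Z‖ for all Z. If ξ := ‖A‖₂‖Ā‖_∞ + C_Φ‖B‖₂‖B̄‖_∞ < 1 and ∑_{t=0}^∞ ‖E(t)‖ < ∞, then ∑_{t=0}^∞ ‖X(t)‖ ≤ ‖X(0)‖/(1−ξ) + (‖B‖₂‖B̄‖_∞/(1−ξ))·∑_{t=0}^∞ ‖E(t)‖. In particular, the closed-loop system is input-state stable. -/

import Mathlib

/-- The `L_{2,1}` graph-signal norm: sum of Euclidean norms of the columns. -/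
noncomputable def l21 {N F : ℕ} (X : Matrix (Fin N) (Fin F) ℝ) : ℝ :=
  ∑ f : Fin F, Real.sqrt (∑ i : Fin N, (X i f) ^ 2)

/-- The spectral norm (operator norm induced by the Euclidean norm). -/
noncomputable def specNorm {N M : ℕ} (A : Matrix (Fin N) (Fin M) ℝ) : ℝ :=
  ‖LinearMap.toContinuousLinearMap (Matrix.toEuclideanLin A)‖

/-- The max-absolute-row-sum operator norm. -/
noncomputable def rowSumNorm {F G : ℕ} (A : Matrix (Fin F) (Fin G) ℝ) : ℝ :=
  ⨆ f : Fin F, ∑ g : Fin G, |A f g|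


/-!
For the `L_{2,1}` norm, `‖A Z M‖ ≤ ‖A‖₂ ‖M‖_∞ ‖Z‖`: `A` acts on each column of `Z` with
operator norm `‖A‖₂`, and column `g` of `Z M` is `∑_f M f g • (column f of Z)`, so after
exchanging the sums over `f` and `g` each column norm of `Z` is weighted by a row sum of `|M|`.
With the triangle inequality this gives the one-step bound
`‖X(t+1)‖ ≤ ξ ‖X(t)‖ + ‖B‖₂ ‖B̄‖_∞ ‖E(t)‖`, and summing it over `t < n` gives
`(1 - ξ) ∑_{t<n} ‖X(t)‖ ≤ ‖X(0)‖ + ‖B‖₂ ‖B̄‖_∞ ∑_t ‖E(t)‖` uniformly in `n`.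
-/

open Finset Matrix

lemma l21_eq_sum_norm_col {N F : ℕ} (X : Matrix (Fin N) (Fin F) ℝ) :
    l21 X = ∑ f, ‖WithLp.toLp 2 (Xᵀ f)‖ := by
  simp [l21, EuclideanSpace.norm_eq]

lemma l21_nonneg {N F : ℕ} (X : Matrix (Fin N) (Fin F) ℝ) : 0 ≤ l21 X := by
  rw [l21_eq_sum_norm_col]
  positivity

lemma l21_add_le {N F : ℕ} (X Y : Matrix (Fin N) (Fin F) ℝ) :
    l21 (X + Y) ≤ l21 X + l21 Y := by
  simp only [l21_eq_sum_norm_col, ← sum_add_distrib]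
  refine sum_le_sum fun f _ => ?_
  exact norm_add_le (WithLp.toLp 2 (Xᵀ f)) (WithLp.toLp 2 (Yᵀ f))

lemma norm_toLp_mulVec_le {N M : ℕ} (A : Matrix (Fin N) (Fin M) ℝ) (v : Fin M → ℝ) :
    ‖WithLp.toLp 2 (A *ᵥ v)‖ ≤ specNorm A * ‖WithLp.toLp 2 v‖ :=
  (LinearMap.toContinuousLinearMap (Matrix.toEuclideanLin A)).le_opNorm (WithLp.toLp 2 v)

lemma l21_mul_left_le {N M F : ℕ} (A : Matrix (Fin N) (Fin M) ℝ) (Z : Matrix (Fin M) (Fin F) ℝ) :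
    l21 (A * Z) ≤ specNorm A * l21 Z := by
  have hcol : ∀ f, (A * Z)ᵀ f = A *ᵥ Zᵀ f := by
    intro f; ext i; simp [mulVec, dotProduct, mul_apply]
  simp only [l21_eq_sum_norm_col, mul_sum, hcol]
  exact sum_le_sum fun f _ => norm_toLp_mulVec_le A (Zᵀ f)

lemma rowSumNorm_nonneg {F G : ℕ} (M : Matrix (Fin F) (Fin G) ℝ) : 0 ≤ rowSumNorm M :=
  Real.iSup_nonneg fun _ => sum_nonneg fun _ _ => abs_nonneg _

lemma sum_abs_le_rowSumNorm {F G : ℕ} (M : Matrix (Fin F) (Fin G) ℝ) (f : Fin F) :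
    ∑ g, |M f g| ≤ rowSumNorm M :=
  le_ciSup (f := fun f => ∑ g, |M f g|) (Set.finite_range _).bddAbove f

lemma l21_mul_right_le {N F G : ℕ} (Z : Matrix (Fin N) (Fin F) ℝ) (M : Matrix (Fin F) (Fin G) ℝ) :
    l21 (Z * M) ≤ rowSumNorm M * l21 Z := by
  have hcol : ∀ g, WithLp.toLp 2 ((Z * M)ᵀ g) = ∑ f, M f g • WithLp.toLp 2 (Zᵀ f) := by
    intro g; ext i; simp [Matrix.mul_apply, mul_comm]
  calc l21 (Z * M) ≤ ∑ g, ∑ f, |M f g| * ‖WithLp.toLp 2 (Zᵀ f)‖ := by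
        rw [l21_eq_sum_norm_col]
        refine sum_le_sum fun g _ => ?_
        rw [hcol]
        refine (norm_sum_le _ _).trans_eq ?_
        simp [norm_smul]
    _ = ∑ f, (∑ g, |M f g|) * ‖WithLp.toLp 2 (Zᵀ f)‖ := by
        rw [sum_comm]; simp only [sum_mul]
    _ ≤ ∑ f, rowSumNorm M * ‖WithLp.toLp 2 (Zᵀ f)‖ :=
        sum_le_sum fun f _ => by gcongr; exact sum_abs_le_rowSumNorm M f
    _ = rowSumNorm M * l21 Z := by rw [l21_eq_sum_norm_col, mul_sum]

lemma l21_mul_mul_le {N M F G : ℕ} (A : Matrix (Fin N) (Fin M) ℝ) (Z : Matrix (Fin M) (Fin F) ℝ)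
    (Ab : Matrix (Fin F) (Fin G) ℝ) :
    l21 (A * Z * Ab) ≤ specNorm A * rowSumNorm Ab * l21 Z :=
  calc l21 (A * Z * Ab) ≤ rowSumNorm Ab * l21 (A * Z) := l21_mul_right_le _ _
    _ ≤ rowSumNorm Ab * (specNorm A * l21 Z) := by
        gcongr
        · exact rowSumNorm_nonneg Ab
        · exact l21_mul_left_le A Z
    _ = specNorm A * rowSumNorm Ab * l21 Z := by ring

lemma sum_range_le_of_le_mul_add {a u : ℕ → ℝ} {ξ : ℝ} (hξ : ξ < 1) (ha : ∀ t, 0 ≤ a t)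
    (hu : ∀ t, 0 ≤ u t) (hu_sum : Summable u) (hrec : ∀ t, a (t + 1) ≤ ξ * a t + u t) (n : ℕ) :
    ∑ t ∈ range n, a t ≤ (a 0 + ∑' t, u t) / (1 - ξ) := by
  have hstep : ∑ t ∈ range (n + 1), a t ≤ a 0 + ξ * ∑ t ∈ range n, a t + ∑' t, u t :=
    calc ∑ t ∈ range (n + 1), a t = a 0 + ∑ t ∈ range n, a (t + 1) := by
          rw [sum_range_succ', add_comm]
      _ ≤ a 0 + (ξ * ∑ t ∈ range n, a t + ∑ t ∈ range n, u t) := by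
          rw [mul_sum, ← sum_add_distrib]
          gcongr with t
          exact hrec t
      _ ≤ a 0 + ξ * ∑ t ∈ range n, a t + ∑' t, u t := by
          linarith [hu_sum.sum_le_tsum (range n) fun t _ => hu t]
  have hmono : ∑ t ∈ range n, a t ≤ ∑ t ∈ range (n + 1), a t :=
    sum_le_sum_of_subset_of_nonneg (range_mono n.le_succ) fun t _ _ => ha t
  rw [le_div_iff₀ (by linarith)]
  linarith

lemma summable_and_tsum_le_of_le_mul_add {a u : ℕ → ℝ} {ξ : ℝ} (hξ : ξ < 1)
    (ha : ∀ t, 0 ≤ a t) (hu : ∀ t, 0 ≤ u t) (hu_sum : Summable u)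
    (hrec : ∀ t, a (t + 1) ≤ ξ * a t + u t) :
    Summable a ∧ ∑' t, a t ≤ (a 0 + ∑' t, u t) / (1 - ξ) := by
  have hbound := sum_range_le_of_le_mul_add hξ ha hu hu_sum hrec
  have ha_sum : Summable a := summable_of_sum_range_le ha hbound
  exact ⟨ha_sum, ha_sum.tsum_le_of_sum_range_le hbound⟩

theorem stmt14_general {N F G : ℕ} (A B : Matrix (Fin N) (Fin N) ℝ)
    (Ab : Matrix (Fin F) (Fin F) ℝ) (Bb : Matrix (Fin G) (Fin F) ℝ)
    (Φ : Matrix (Fin N) (Fin F) ℝ → Matrix (Fin N) (Fin G) ℝ) (CΦ : ℝ)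
    (hΦ : ∀ Z, l21 (Φ Z) ≤ CΦ * l21 Z)
    (X : ℕ → Matrix (Fin N) (Fin F) ℝ) (E : ℕ → Matrix (Fin N) (Fin G) ℝ)
    (hdyn : ∀ t, X (t + 1) = A * X t * Ab + B * (Φ (X t) + E t) * Bb)
    (hξ : specNorm A * rowSumNorm Ab + CΦ * (specNorm B * rowSumNorm Bb) < 1)
    (hE : Summable fun t => l21 (E t)) :
    Summable (fun t => l21 (X t)) ∧
      ∑' t, l21 (X t)
        ≤ l21 (X 0) / (1 - (specNorm A * rowSumNorm Ab + CΦ * (specNorm B * rowSumNorm Bb)))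
          + (specNorm B * rowSumNorm Bb
              / (1 - (specNorm A * rowSumNorm Ab + CΦ * (specNorm B * rowSumNorm Bb))))
            * ∑' t, l21 (E t) := by
  set α := specNorm A * rowSumNorm Ab
  set β := specNorm B * rowSumNorm Bb
  have hβ : 0 ≤ β := mul_nonneg (norm_nonneg _) (rowSumNorm_nonneg Bb)
  have hstep : ∀ t, l21 (X (t + 1)) ≤ (α + CΦ * β) * l21 (X t) + β * l21 (E t) := by
    intro t
    calc l21 (X (t + 1))
        ≤ α * l21 (X t) + β * l21 (Φ (X t) + E t) := by
          rw [hdyn t]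
          exact (l21_add_le _ _).trans (add_le_add (l21_mul_mul_le _ _ _) (l21_mul_mul_le _ _ _))
      _ ≤ α * l21 (X t) + β * (CΦ * l21 (X t) + l21 (E t)) := by
          gcongr
          exact (l21_add_le _ _).trans (add_le_add_left (hΦ (X t)) _)
      _ = (α + CΦ * β) * l21 (X t) + β * l21 (E t) := by ring
  obtain ⟨hX, hbound⟩ := summable_and_tsum_le_of_le_mul_add hξ (fun t => l21_nonneg (X t))
    (fun t => mul_nonneg hβ (l21_nonneg (E t))) (hE.mul_left β) hstep
  refine ⟨hX, hbound.trans_eq ?_⟩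
  rw [tsum_mul_left]
  ring

/-- Theorem 1 (Sufficient condition for input-state stability): for the closed-loop system
`X(t+1) = A X(t) Ā + B (Φ(X(t)) + E(t)) B̄` with `‖Φ(Z)‖ ≤ C_Φ ‖Z‖`, if
`ξ = ‖A‖₂‖Ā‖_∞ + C_Φ‖B‖₂‖B̄‖_∞ < 1` and `∑_t ‖E(t)‖ < ∞`, then `∑_t ‖X(t)‖` converges and
`∑_t ‖X(t)‖ ≤ ‖X(0)‖/(1−ξ) + (‖B‖₂‖B̄‖_∞/(1−ξ)) ∑_t ‖E(t)‖`. -/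
theorem stmt14 {N F G : ℕ} (A B : Matrix (Fin N) (Fin N) ℝ)
    (Ab : Matrix (Fin F) (Fin F) ℝ) (Bb : Matrix (Fin G) (Fin F) ℝ)
    (Φ : Matrix (Fin N) (Fin F) ℝ → Matrix (Fin N) (Fin G) ℝ) (CΦ : ℝ) (hCΦ : 0 ≤ CΦ)
    (hΦ : ∀ Z, l21 (Φ Z) ≤ CΦ * l21 Z)
    (X : ℕ → Matrix (Fin N) (Fin F) ℝ) (E : ℕ → Matrix (Fin N) (Fin G) ℝ)
    (hdyn : ∀ t, X (t + 1) = A * X t * Ab + B * (Φ (X t) + E t) * Bb)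
    (hξ : specNorm A * rowSumNorm Ab + CΦ * (specNorm B * rowSumNorm Bb) < 1)
    (hE : Summable fun t => l21 (E t)) :
    Summable (fun t => l21 (X t)) ∧
      ∑' t, l21 (X t)
        ≤ l21 (X 0) / (1 - (specNorm A * rowSumNorm Ab + CΦ * (specNorm B * rowSumNorm Bb)))
          + (specNorm B * rowSumNorm Bb
              / (1 - (specNorm A * rowSumNorm Ab + CΦ * (specNorm B * rowSumNorm Bb))))
            * ∑' t, l21 (E t) :=
  stmt14_general A B Ab Bb Φ CΦ hΦ X E hdyn hξ hE
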